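/- Let π = (n_1,…,n_m) (m ≥ 2) be a partition of n and (i,j) ∈ P_m. If R is a block Jacobi annihilator from the class I_ij, then its transpose R^T also belongs to I_ij; in fact, R_ij(Û)^T = R_ij(Û^T) for every orthogonal matrix Û of order n_i+n_j. Moreover, for any 0 < ρ ≤ 1, if R ∈ I_ij^{UBC(ρ)}, then R^T ∈ I_ij^{UBC(ρ)}. -/

import Mathlib

namespace BlockJacobi

open scoped BigOperators

attribute [local instance] Classical.propDecidable

noncomputable section

/-- Offset (starting index) of block `r` for the partition `c`. -/
def off (c : ℕ → ℕ) (r : ℕ) : ℕ := ∑ k ∈ Finset.range r, c k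

/-- `t` belongs to block `r`. -/
def inBlk (c : ℕ → ℕ) (r t : ℕ) : Prop := off c r ≤ t ∧ t < off c r + c r

/-- `s` and `t` belong to the same block (among the first `m` blocks). -/
def sameBlk (c : ℕ → ℕ) (m s t : ℕ) : Prop := ∃ r, r < m ∧ inBlk c r s ∧ inBlk c r t

/-- `t` belongs to the pivot zone: block `i` or block `j`. -/
def inPiv (c : ℕ → ℕ) (i j t : ℕ) : Prop := inBlk c i t ∨ inBlk c j t

/-- `(c, m)` is a partition of `n` into `m` blocks (0-based blocks `0,…,m-1`). -/
def IsPartition (n m : ℕ) (c : ℕ → ℕ) : Prop :=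
  2 ≤ m ∧ (∀ i < m, 1 ≤ c i) ∧ ∑ i ∈ Finset.range m, c i = n

/-- elementary block matrix with (0-based) pivot pair `(i,j)`. -/
def IsElem {n : ℕ} (c : ℕ → ℕ) (i j : ℕ) (U : Matrix (Fin n) (Fin n) ℝ) : Prop :=
  ∀ s t : Fin n, ¬(inPiv c i j (s : ℕ) ∧ inPiv c i j (t : ℕ)) →
    U s t = if s = t then 1 else 0

/-- orthogonality. -/
def Orth {n : ℕ} (U : Matrix (Fin n) (Fin n) ℝ) : Prop := U.transpose * U = 1

/-- Euclidean norm of a vector. -/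
def enorm {ι : Type*} [Fintype ι] (x : ι → ℝ) : ℝ := Real.sqrt (∑ i, x i ^ 2)

/-- smallest singular value of the `(r,r)` diagonal block of `U`. -/
def sigmaMinBlk {n : ℕ} (c : ℕ → ℕ) (r : ℕ) (U : Matrix (Fin n) (Fin n) ℝ) : ℝ :=
  sInf { v : ℝ | ∃ x : Fin n → ℝ,
    (∀ t : Fin n, ¬ inBlk c r (t : ℕ) → x t = 0) ∧ enorm x = 1 ∧
    enorm (fun t : Fin n => if inBlk c r (t : ℕ) then U.mulVec x t else 0) = v }

/-- the constant `γ_{ij}` of the UBC class. -/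
def gammaUBC (c : ℕ → ℕ) (i j : ℕ) : ℝ :=
  3 / Real.sqrt (((4 : ℝ) ^ c i + 6 * (c j : ℝ) - 1) * ((c j : ℝ) + 1))

/-- `U` is in the UBC class with pivot pair `(i,j)`: block structure given by `cs`,
`γ`-bound computed from the partition `cg`. -/
def IsUBC2 {n : ℕ} (cs cg : ℕ → ℕ) (ρ : ℝ) (i j : ℕ) (U : Matrix (Fin n) (Fin n) ℝ) : Prop :=
  IsElem cs i j U ∧ Orth U ∧ sigmaMinBlk cs i U = sigmaMinBlk cs j U ∧
    ρ * gammaUBC cg i j ≤ sigmaMinBlk cs i U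

/-- `U ∈ UBC_π(ρ)` with pivot pair `(i,j)`. -/
def IsUBC {n : ℕ} (c : ℕ → ℕ) (ρ : ℝ) (i j : ℕ) (U : Matrix (Fin n) (Fin n) ℝ) : Prop :=
  IsUBC2 c c ρ i j U

/-- the `(i,j)` pivot submatrix of `A` is diagonal. -/
def PivDiag {n : ℕ} (c : ℕ → ℕ) (i j : ℕ) (A : Matrix (Fin n) (Fin n) ℝ) : Prop :=
  ∀ s t : Fin n, s ≠ t → inPiv c i j (s : ℕ) → inPiv c i j (t : ℕ) → A s t = 0

/-- square of the off-norm `S(A)`. -/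
def offSq {n : ℕ} (A : Matrix (Fin n) (Fin n) ℝ) : ℝ :=
  ∑ s : Fin n, ∑ t : Fin n, if (s : ℕ) < (t : ℕ) then A s t ^ 2 else 0

/-- square of the off-norm of the `(i,j)` pivot submatrix of `A`. -/
def offSqPiv {n : ℕ} (c : ℕ → ℕ) (i j : ℕ) (A : Matrix (Fin n) (Fin n) ℝ) : ℝ :=
  ∑ s : Fin n, ∑ t : Fin n,
    if (s : ℕ) < (t : ℕ) ∧ inPiv c i j (s : ℕ) ∧ inPiv c i j (t : ℕ) then A s t ^ 2 else 0

/-- Frobenius norm. -/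
def frob {n : ℕ} (A : Matrix (Fin n) (Fin n) ℝ) : ℝ :=
  Real.sqrt (∑ s : Fin n, ∑ t : Fin n, A s t ^ 2)

/-- One sweep of the block Jacobi method along the pivot list `L`; block structure from
`cs`, UBC bound computed from the partition `cg`. -/
def Sweep2 {n : ℕ} (cs cg : ℕ → ℕ) (ρ : ℝ) (L : List (ℕ × ℕ))
    (A A' : Matrix (Fin n) (Fin n) ℝ) : Prop :=
  ∃ B : ℕ → Matrix (Fin n) (Fin n) ℝ,
    B 0 = A ∧ B L.length = A' ∧
    ∀ (k : ℕ) (hk : k < L.length),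
      ∃ U : Matrix (Fin n) (Fin n) ℝ,
        IsUBC2 cs cg ρ (L.get ⟨k, hk⟩).1 (L.get ⟨k, hk⟩).2 U ∧
        B (k + 1) = U.transpose * B k * U ∧
        PivDiag cs (L.get ⟨k, hk⟩).1 (L.get ⟨k, hk⟩).2 (B (k + 1))

/-- One sweep of the block Jacobi method with `UBC_π(ρ)` transformations. -/
def Sweep {n : ℕ} (c : ℕ → ℕ) (ρ : ℝ) (L : List (ℕ × ℕ))
    (A A' : Matrix (Fin n) (Fin n) ℝ) : Prop :=
  Sweep2 c c ρ L A A'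

/-- `L ∈ O(P_m)` (0-based pairs). -/
def SeqOn (m : ℕ) (L : List (ℕ × ℕ)) : Prop :=
  (∀ p ∈ L, p.1 < p.2 ∧ p.2 < m) ∧ ∀ i j : ℕ, i < j → j < m → (i, j) ∈ L

/-- `L ∈ O(S)` for `S ⊆ P_m`. -/
def SeqOnSet (S : Set (ℕ × ℕ)) (L : List (ℕ × ℕ)) : Prop :=
  (∀ p ∈ L, p ∈ S) ∧ ∀ p ∈ S, p ∈ L

/-- the class `B_c^(m)` of column-wise orderings (0-based). -/
def memBc (m : ℕ) (L : List (ℕ × ℕ)) : Prop :=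
  ∃ τ : ℕ → ℕ → ℕ,
    (∀ j, Set.BijOn (τ j) (Set.Iio j) (Set.Iio j)) ∧
    L = (List.range' 1 (m - 1)).flatMap fun j => (List.range j).map fun a => (τ j a, j)

/-- the class `B_r^(m)` of row-wise orderings (0-based). -/
def memBr (m : ℕ) (L : List (ℕ × ℕ)) : Prop :=
  ∃ σ : ℕ → ℕ → ℕ,
    (∀ i, Set.BijOn (σ i) (Set.Ico (i + 1) m) (Set.Ico (i + 1) m)) ∧
    L = ((List.range (m - 1)).reverse).flatMap fun i =>
      (List.range' (i + 1) (m - 1 - i)).map fun b => (i, σ i b)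

/-- the class `B_sp^(m)` of serial orderings with permutations. -/
def memBsp (m : ℕ) (L : List (ℕ × ℕ)) : Prop :=
  memBc m L ∨ memBc m L.reverse ∨ memBr m L ∨ memBr m L.reverse

/-- the quasi-cyclic class `B̄_c^(m)`. -/
def memBcQ (m : ℕ) (L : List (ℕ × ℕ)) : Prop :=
  ∃ (τ : ℕ → ℕ → ℕ) (E : ℕ → List (ℕ × ℕ)),
    (∀ j, Set.BijOn (τ j) (Set.Iio j) (Set.Iio j)) ∧
    (∀ j, ∀ p ∈ E j, p.1 < p.2 ∧ p.2 ≤ j) ∧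
    L = (List.range' 1 (m - 1)).flatMap fun j =>
      ((List.range j).map fun a => (τ j a, j)) ++ (if j = 1 then [] else E j)

/-- one admissible transposition (on lists of `α`'s carrying pairs via `pr`). -/
def AdjSwapG {α : Type*} (pr : α → ℕ × ℕ) (L L' : List α) : Prop :=
  ∃ (l₁ l₂ : List α) (a b : α),
    ({(pr a).1, (pr a).2} ∩ {(pr b).1, (pr b).2} : Set ℕ) = ∅ ∧
    L = l₁ ++ a :: b :: l₂ ∧ L' = l₁ ++ b :: a :: l₂

/-- equivalence (finitely many admissible transpositions). -/
def EquivG {α : Type*} (pr : α → ℕ × ℕ) : List α → List α → Prop :=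
  Relation.ReflTransGen (AdjSwapG pr)

/-- shift-equivalence. -/
def ShiftG {α : Type*} (L L' : List α) : Prop :=
  ∃ l₁ l₂ : List α, L = l₁ ++ l₂ ∧ L' = l₂ ++ l₁

/-- weak equivalence. -/
def WeakG {α : Type*} (pr : α → ℕ × ℕ) : List α → List α → Prop :=
  Relation.ReflTransGen fun X Y => EquivG pr X Y ∨ ShiftG X Y

/-- equivalence of pivot sequences. -/
def PEquivL : List (ℕ × ℕ) → List (ℕ × ℕ) → Prop := EquivG id

/-- shift-equivalence of pivot sequences. -/
def ShiftEq : List (ℕ × ℕ) → List (ℕ × ℕ) → Prop := ShiftG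

/-- weak equivalence of pivot sequences. -/
def WeakEq : List (ℕ × ℕ) → List (ℕ × ℕ) → Prop := WeakG id

/-- weak equivalence realized by a chain containing exactly `d` shift-equivalent
adjacent pairs (all other adjacent pairs being equivalent). -/
def WeakChainD (d : ℕ) (L L' : List (ℕ × ℕ)) : Prop :=
  ∃ (r : ℕ) (cs : ℕ → List (ℕ × ℕ)) (s : Finset ℕ),
    cs 0 = L ∧ cs r = L' ∧ s.card = d ∧ (∀ k ∈ s, k < r) ∧
    ∀ k < r, if k ∈ s then ShiftEq (cs k) (cs (k + 1)) else PEquivL (cs k) (cs (k + 1))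

/-- `q` is a permutation of `{0,…,m-1}`. -/
def IsPermOn (m : ℕ) (q : ℕ → ℕ) : Prop := Set.BijOn q (Set.Iio m) (Set.Iio m)

/-- `O(q)`: apply a permutation to all pairs of the sequence. -/
def pApply (q : ℕ → ℕ) (L : List (ℕ × ℕ)) : List (ℕ × ℕ) :=
  L.map fun p => if q p.1 < q p.2 then (q p.1, q p.2) else (q p.2, q p.1)

/-- `compSeq q t = q_t ∘ q_{t-1} ∘ ⋯ ∘ q_1`. -/
def compSeq (q : ℕ → ℕ → ℕ) : ℕ → ℕ → ℕ
  | 0 => id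
  | t + 1 => q (t + 1) ∘ compSeq q t

/-- the class `B_spg^(m)`. -/
def memBspg (m : ℕ) (L : List (ℕ × ℕ)) : Prop :=
  ∃ L' L'' : List (ℕ × ℕ), memBsp m L'' ∧
    ((∃ q, IsPermOn m q ∧ L' = pApply q L) ∧ PEquivL L' L'' ∨
      PEquivL L L' ∧ ∃ q, IsPermOn m q ∧ L'' = pApply q L')

/-- the class `B_sg^(m)` of generalized serial orderings. -/
def memBsg (m : ℕ) (L : List (ℕ × ℕ)) : Prop :=
  ∃ L' L'' : List (ℕ × ℕ), memBsp m L'' ∧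
    ((∃ q, IsPermOn m q ∧ L' = pApply q L) ∧ WeakEq L' L'' ∨
      WeakEq L L' ∧ ∃ q, IsPermOn m q ∧ L'' = pApply q L')

/-- index set of the entries of the off-diagonal blocks in the upper triangle;
it has cardinality `K`. -/
def OffI (n m : ℕ) (c : ℕ → ℕ) : Type :=
  { p : Fin n × Fin n // (p.1 : ℕ) < (p.2 : ℕ) ∧ ¬ sameBlk c m (p.1 : ℕ) (p.2 : ℕ) }

instance (n m : ℕ) (c : ℕ → ℕ) : Fintype (OffI n m c) := by
  unfold OffI; exact Subtype.fintype _

instance (n m : ℕ) (c : ℕ → ℕ) : DecidableEq (OffI n m c) := Classical.decEq _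

/-- `vec_{π,0}⁻¹` : the symmetric matrix with zero diagonal blocks built from a vector. -/
def symOf {n m : ℕ} {c : ℕ → ℕ} (a : OffI n m c → ℝ) : Matrix (Fin n) (Fin n) ℝ :=
  fun s t =>
    if h : (s : ℕ) < (t : ℕ) ∧ ¬ sameBlk c m (s : ℕ) (t : ℕ) then a ⟨(s, t), h⟩
    else if h' : (t : ℕ) < (s : ℕ) ∧ ¬ sameBlk c m (t : ℕ) (s : ℕ) then a ⟨(t, s), h'⟩
    else 0

/-- `N_{ij}` : set the pivot submatrix to zero. -/
def nij {n : ℕ} (c : ℕ → ℕ) (i j : ℕ) (M : Matrix (Fin n) (Fin n) ℝ) :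
    Matrix (Fin n) (Fin n) ℝ :=
  fun s t => if inPiv c i j (s : ℕ) ∧ inPiv c i j (t : ℕ) then 0 else M s t

/-- the block Jacobi annihilator `R_{ij}(Û)` (as a `K×K` matrix), parametrized by the
full elementary block matrix `U` with pivot pair `(i,j)` and pivot submatrix `Û`. -/
def annih (n m : ℕ) (c : ℕ → ℕ) (i j : ℕ) (U : Matrix (Fin n) (Fin n) ℝ) :
    Matrix (OffI n m c) (OffI n m c) ℝ :=
  fun p q => nij c i j (U.transpose * symOf (Pi.single q (1 : ℝ)) * U) p.1.1 p.1.2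

/-- the class `I_{ij}` of block Jacobi annihilators. -/
def Iij (n m : ℕ) (c : ℕ → ℕ) (i j : ℕ) : Set (Matrix (OffI n m c) (OffI n m c) ℝ) :=
  { R | ∃ U : Matrix (Fin n) (Fin n) ℝ, IsElem c i j U ∧ Orth U ∧ R = annih n m c i j U }

/-- the class `I_{ij}^{UBC(ρ)}`. -/
def IijUBC (n m : ℕ) (c : ℕ → ℕ) (ρ : ℝ) (i j : ℕ) :
    Set (Matrix (OffI n m c) (OffI n m c) ℝ) :=
  { R | ∃ U : Matrix (Fin n) (Fin n) ℝ, IsUBC c ρ i j U ∧ R = annih n m c i j U }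

/-- the class `J_O^{UBC_π(ρ)}` of block Jacobi operators. -/
def JopUBC (n m : ℕ) (c : ℕ → ℕ) (ρ : ℝ) (L : List (ℕ × ℕ)) :
    Set (Matrix (OffI n m c) (OffI n m c) ℝ) :=
  { J | ∃ R : ℕ → Matrix (OffI n m c) (OffI n m c) ℝ,
      (∀ (k : ℕ) (hk : k < L.length),
        R k ∈ IijUBC n m c ρ (L.get ⟨k, hk⟩).1 (L.get ⟨k, hk⟩).2) ∧
      J = (((List.range L.length).reverse).map R).prod }

/-- spectral norm (operator 2-norm). -/
def specNorm {ι : Type*} [Fintype ι] (M : Matrix ι ι ℝ) : ℝ :=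
  sSup { v : ℝ | ∃ x : ι → ℝ, enorm x = 1 ∧ enorm (M.mulVec x) = v }

/-- spectral radius. -/
def specRad {ι : Type*} [Fintype ι] (M : Matrix ι ι ℝ) : ℝ :=
  sSup { v : ℝ | ∃ (μ : ℂ) (x : ι → ℂ), x ≠ 0 ∧
    (M.map (fun r : ℝ => (r : ℂ))).mulVec x = μ • x ∧ v = ‖μ‖ }

/-- product `R_{T-1} ⋯ R_1 R_0` of a decorated pivot list. -/
def prodD {n m : ℕ} {c : ℕ → ℕ}
    (L : List ((ℕ × ℕ) × Matrix (OffI n m c) (OffI n m c) ℝ)) :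
    Matrix (OffI n m c) (OffI n m c) ℝ :=
  ((L.map Prod.snd).reverse).prod

/-- plane (Givens) rotation in the `(i,j)` coordinate plane. -/
def rotM (n : ℕ) (i j : ℕ) (φ : ℝ) : Matrix (Fin n) (Fin n) ℝ :=
  fun s t =>
    if (s : ℕ) = i ∧ (t : ℕ) = i then Real.cos φ
    else if (s : ℕ) = j ∧ (t : ℕ) = j then Real.cos φ
    else if (s : ℕ) = i ∧ (t : ℕ) = j then - Real.sin φ
    else if (s : ℕ) = j ∧ (t : ℕ) = i then Real.sin φ
    else if s = t then 1 else 0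

/-- One sweep of the scalar (element-wise) cyclic Jacobi method with rotation
angles in `[-π/4, π/4]`. -/
def ScalarSweep {n : ℕ} (L : List (ℕ × ℕ)) (A A' : Matrix (Fin n) (Fin n) ℝ) : Prop :=
  ∃ (B : ℕ → Matrix (Fin n) (Fin n) ℝ) (φ : ℕ → ℝ),
    B 0 = A ∧ B L.length = A' ∧
    ∀ (k : ℕ) (hk : k < L.length),
      |φ k| ≤ Real.pi / 4 ∧
      B (k + 1) =
        (rotM n (L.get ⟨k, hk⟩).1 (L.get ⟨k, hk⟩).2 (φ k)).transpose * B k *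
          rotM n (L.get ⟨k, hk⟩).1 (L.get ⟨k, hk⟩).2 (φ k) ∧
      ∀ s t : Fin n, (s : ℕ) = (L.get ⟨k, hk⟩).1 → (t : ℕ) = (L.get ⟨k, hk⟩).2 →
        B (k + 1) s t = 0

/-- `k` concatenated copies of a list. -/
def iterList {α : Type*} : ℕ → List α → List α
  | 0, _ => []
  | k + 1, L => L ++ iterList k L

/-!
Entrywise, `R_ij(Û)` has `(p, q)` entry `U q₁ p₁ * U q₂ p₂ + U q₂ p₁ * U q₁ p₂` unless `p` lies in
the pivot submatrix, where it is `0`. An elementary block matrix has no entries linking the pivot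
zone with its complement, so the masks on `p` and on `q` may be exchanged, and exchanging `p` and
`q` then amounts to transposing `U`.

For the UBC class, the smallest singular value of a diagonal block is invariant under
transposition: if the compressed block `Bᵀ` satisfies `σ ‖y‖ ≤ ‖Bᵀ y‖` with `σ > 0`, it is
invertible, and for `x = Bᵀ y` Cauchy–Schwarz gives `‖x‖² = ⟪B x, y⟫ ≤ ‖B x‖ ‖x‖ / σ`.
-/

open scoped RealInnerProductSpace

section AdjointLowerBound

variable {E : Type*} [NormedAddCommGroup E] [InnerProductSpace ℝ E] [FiniteDimensional ℝ E]
  {T S : E →ₗ[ℝ] E}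

theorem mul_norm_le_norm_of_adjoint (hTS : ∀ x y, ⟪T x, y⟫ = ⟪x, S y⟫) {σ : ℝ}
    (hS : ∀ y, σ * ‖y‖ ≤ ‖S y‖) (x : E) : σ * ‖x‖ ≤ ‖T x‖ := by
  rcases le_or_gt σ 0 with hσ | hσ
  · exact (mul_nonpos_of_nonpos_of_nonneg hσ (norm_nonneg x)).trans (norm_nonneg _)
  have hinj : Function.Injective S := by
    refine (injective_iff_map_eq_zero S).2 fun y hy => norm_eq_zero.1 ?_
    have := hS y
    rw [hy, norm_zero] at this
    nlinarith [norm_nonneg y]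
  obtain ⟨y, rfl⟩ := LinearMap.injective_iff_surjective.1 hinj x
  rcases (norm_nonneg (S y)).eq_or_lt with h0 | hpos
  · rw [← h0, mul_zero]
    exact norm_nonneg _
  refine le_of_mul_le_mul_right ?_ hpos
  calc σ * ‖S y‖ * ‖S y‖ = σ * ⟪T (S y), y⟫ := by
        rw [hTS, real_inner_self_eq_norm_mul_norm, mul_assoc]
    _ ≤ σ * (‖T (S y)‖ * ‖y‖) := by gcongr; exact real_inner_le_norm _ _
    _ = ‖T (S y)‖ * (σ * ‖y‖) := by ring
    _ ≤ ‖T (S y)‖ * ‖S y‖ := by gcongr; exact hS y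

theorem sInf_norm_image_sphere_le_of_adjoint (hTS : ∀ x y, ⟪T x, y⟫ = ⟪x, S y⟫) :
    sInf ((fun y => ‖S y‖) '' Metric.sphere 0 1) ≤
      sInf ((fun x => ‖T x‖) '' Metric.sphere 0 1) := by
  set σ := sInf ((fun y => ‖S y‖) '' Metric.sphere 0 1)
  rcases (Metric.sphere (0 : E) 1).eq_empty_or_nonempty with h | h
  · simp [σ, h]
  have hbdd : BddBelow ((fun y => ‖S y‖) '' Metric.sphere (0 : E) 1) :=
    ⟨0, by rintro _ ⟨y, -, rfl⟩; exact norm_nonneg _⟩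
  have hS : ∀ y, σ * ‖y‖ ≤ ‖S y‖ := by
    intro y
    rcases eq_or_ne y 0 with rfl | hy
    · simp
    have hunit : ‖y‖⁻¹ • y ∈ Metric.sphere (0 : E) 1 := by simp [norm_smul, hy]
    have := csInf_le hbdd (Set.mem_image_of_mem _ hunit)
    rw [map_smul, norm_smul, norm_inv, norm_norm] at this
    have hpos : 0 < ‖y‖ := norm_pos_iff.2 hy
    calc σ * ‖y‖ ≤ ‖y‖⁻¹ * ‖S y‖ * ‖y‖ := by gcongr
      _ = ‖S y‖ := by field_simp
  refine le_csInf (h.image _) ?_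
  rintro _ ⟨x, hx, rfl⟩
  simpa [mem_sphere_zero_iff_norm.1 hx] using mul_norm_le_norm_of_adjoint hTS hS x

theorem sInf_norm_image_sphere_eq_of_adjoint (hTS : ∀ x y, ⟪T x, y⟫ = ⟪x, S y⟫) :
    sInf ((fun y => ‖S y‖) '' Metric.sphere 0 1) =
      sInf ((fun x => ‖T x‖) '' Metric.sphere 0 1) :=
  le_antisymm (sInf_norm_image_sphere_le_of_adjoint hTS)
    (sInf_norm_image_sphere_le_of_adjoint fun y x => by
      rw [real_inner_comm, ← hTS, real_inner_comm])

end AdjointLowerBound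

section BlockCompression

open Matrix

variable {n : ℕ} (c : ℕ → ℕ) (r : ℕ)

def blockMask (v : Fin n → ℝ) : Fin n → ℝ := fun t => if inBlk c r t then v t else 0

lemma blockMask_dotProduct (v w : Fin n → ℝ) : blockMask c r v ⬝ᵥ w = v ⬝ᵥ blockMask c r w := by
  simp only [dotProduct, blockMask, ite_mul, mul_ite, zero_mul, mul_zero]

lemma blockMask_eq_self {v : Fin n → ℝ} (hv : ∀ t : Fin n, ¬ inBlk c r t → v t = 0) :
    blockMask c r v = v :=
  funext fun t => by by_cases ht : inBlk c r t <;> simp [blockMask, ht, hv t]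

def blockSubspace : Submodule ℝ (EuclideanSpace ℝ (Fin n)) where
  carrier := {x | ∀ t : Fin n, ¬ inBlk c r t → x t = 0}
  add_mem' hx hy t ht := by simp [hx t ht, hy t ht]
  zero_mem' _ _ := rfl
  smul_mem' a _ hx t ht := by simp [hx t ht]

def blockCompress (A : Matrix (Fin n) (Fin n) ℝ) :
    blockSubspace (n := n) c r →ₗ[ℝ] blockSubspace (n := n) c r where
  toFun x := ⟨WithLp.toLp 2 (blockMask c r (A *ᵥ (x : EuclideanSpace ℝ (Fin n)).ofLp)),
    fun t ht => if_neg ht⟩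
  map_add' x y := by ext t; simp [blockMask, Matrix.mulVec_add, ite_add_ite]
  map_smul' a x := by ext t; simp [blockMask, Matrix.mulVec_smul]

lemma enorm_eq_norm_toLp (v : Fin n → ℝ) : enorm v = ‖WithLp.toLp 2 v‖ := by
  simp [enorm, EuclideanSpace.norm_eq]

lemma sigmaMinBlk_eq_sInf (A : Matrix (Fin n) (Fin n) ℝ) :
    sigmaMinBlk c r A = sInf ((fun x => ‖blockCompress c r A x‖) '' Metric.sphere 0 1) := by
  unfold sigmaMinBlk
  congr 1
  ext v
  constructor
  · rintro ⟨x, hx, hx1, rfl⟩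
    refine ⟨⟨WithLp.toLp 2 x, hx⟩, ?_, ?_⟩
    · simpa [Submodule.coe_norm, ← enorm_eq_norm_toLp] using hx1
    · simp [Submodule.coe_norm, blockCompress, enorm_eq_norm_toLp]; rfl
  · rintro ⟨x, hx, rfl⟩
    refine ⟨x.1.ofLp, x.2, ?_, ?_⟩
    · simpa [Submodule.coe_norm, enorm_eq_norm_toLp] using hx
    · simp [Submodule.coe_norm, blockCompress, enorm_eq_norm_toLp]; rfl

lemma inner_blockCompress (A : Matrix (Fin n) (Fin n) ℝ) (x y : blockSubspace c r) :
    ⟪blockCompress c r A x, y⟫ = ⟪x, blockCompress c r A.transpose y⟫ := by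
  have hx := blockMask_eq_self c r x.2
  have hy := blockMask_eq_self c r y.2
  simp only [Submodule.coe_inner, blockCompress, LinearMap.coe_mk, AddHom.coe_mk,
    EuclideanSpace.inner_eq_star_dotProduct, star_trivial]
  rw [dotProduct_comm, blockMask_dotProduct, hy, blockMask_dotProduct, hx,
    dotProduct_comm _ x.1.ofLp, dotProduct_mulVec, vecMul_transpose]

end BlockCompression

lemma sigmaMinBlk_transpose {n : ℕ} (c : ℕ → ℕ) (r : ℕ) (A : Matrix (Fin n) (Fin n) ℝ) :
    sigmaMinBlk c r A.transpose = sigmaMinBlk c r A := by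
  rw [sigmaMinBlk_eq_sInf, sigmaMinBlk_eq_sInf]
  exact sInf_norm_image_sphere_eq_of_adjoint (inner_blockCompress c r A)

section SymmetricOfVector

variable {n m : ℕ} {c : ℕ → ℕ}

-- `OffI` is a plain `def`, so an anonymous constructor would be typed by the underlying subtype
-- and `Pi.single_apply` could not rewrite at it.
def OffI.mk (s t : Fin n) (h : (s : ℕ) < t ∧ ¬ sameBlk c m s t) :
    OffI n m c :=
  ⟨(s, t), h⟩

lemma OffI.mk_eq_iff {s t : Fin n} (h : (s : ℕ) < t ∧ ¬ sameBlk c m s t)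
    (q : OffI n m c) : OffI.mk s t h = q ↔ s = q.1.1 ∧ t = q.1.2 :=
  Subtype.ext_iff.trans Prod.ext_iff

lemma symOf_apply_of_lt (a : OffI n m c → ℝ) {s t : Fin n}
    (h : (s : ℕ) < t ∧ ¬ sameBlk c m s t) : symOf a s t = a (OffI.mk s t h) :=
  dif_pos h

lemma symOf_apply_of_gt (a : OffI n m c → ℝ) {s t : Fin n}
    (h : (t : ℕ) < s ∧ ¬ sameBlk c m t s) : symOf a s t = a (OffI.mk t s h) :=
  (dif_neg fun h' => by omega).trans (dif_pos h)

lemma symOf_apply_eq_zero (a : OffI n m c → ℝ) {s t : Fin n}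
    (h₁ : ¬ ((s : ℕ) < t ∧ ¬ sameBlk c m s t)) (h₂ : ¬ ((t : ℕ) < s ∧ ¬ sameBlk c m t s)) :
    symOf a s t = 0 :=
  (dif_neg h₁).trans (dif_neg h₂)

lemma symOf_single (q : OffI n m c) :
    symOf (Pi.single q (1 : ℝ)) =
      Matrix.single q.1.1 q.1.2 1 + Matrix.single q.1.2 q.1.1 1 := by
  have hlt : (q.1.1 : ℕ) < q.1.2 := q.2.1
  ext s t
  by_cases h₁ : (s : ℕ) < t ∧ ¬ sameBlk c m s t
  · simp only [symOf_apply_of_lt _ h₁, Pi.single_apply, OffI.mk_eq_iff, Matrix.add_apply,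
      Matrix.single_apply, Fin.ext_iff]
    split_ifs <;> first | omega | norm_num
  by_cases h₂ : (t : ℕ) < s ∧ ¬ sameBlk c m t s
  · simp only [symOf_apply_of_gt _ h₂, Pi.single_apply, OffI.mk_eq_iff, Matrix.add_apply,
      Matrix.single_apply, Fin.ext_iff]
    split_ifs <;> first | omega | norm_num
  rw [symOf_apply_eq_zero _ h₁ h₂, Matrix.add_apply, Matrix.single_apply, Matrix.single_apply,
    if_neg (by rintro ⟨rfl, rfl⟩; exact h₁ q.2), if_neg (by rintro ⟨rfl, rfl⟩; exact h₂ q.2),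
    add_zero]

end SymmetricOfVector

lemma transpose_mul_single_mul_apply {n : ℕ} (U : Matrix (Fin n) (Fin n) ℝ) (a b s t : Fin n) :
    (U.transpose * (Matrix.single a b 1 : Matrix (Fin n) (Fin n) ℝ) * U) s t = U a s * U b t := by
  simp [Matrix.mul_apply, Matrix.single_apply, ite_and, Finset.sum_ite_eq]

section Annihilator

variable {n m : ℕ} {c : ℕ → ℕ} {i j : ℕ}

lemma IsElem.transpose {U : Matrix (Fin n) (Fin n) ℝ} (hU : IsElem c i j U) :
    IsElem c i j U.transpose := fun s t hst => by
  rw [Matrix.transpose_apply, hU t s fun h => hst h.symm]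
  exact if_congr eq_comm rfl rfl

lemma IsElem.apply_eq_zero {U : Matrix (Fin n) (Fin n) ℝ} (hU : IsElem c i j U) {s t : Fin n}
    (hs : inPiv c i j s) (ht : ¬ inPiv c i j t) : U s t = 0 := by
  rw [hU s t fun h => ht h.2, if_neg]
  rintro rfl
  exact ht hs

lemma Orth.transpose {U : Matrix (Fin n) (Fin n) ℝ} (hU : Orth U) : Orth U.transpose := by
  rw [Orth, Matrix.transpose_transpose]
  exact mul_eq_one_comm.1 hU

lemma annih_apply (U : Matrix (Fin n) (Fin n) ℝ) (p q : OffI n m c) :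
    annih n m c i j U p q =
      if inPiv c i j p.1.1 ∧ inPiv c i j p.1.2 then 0
      else U q.1.1 p.1.1 * U q.1.2 p.1.2 + U q.1.2 p.1.1 * U q.1.1 p.1.2 := by
  simp only [annih, nij, symOf_single, Matrix.mul_add, Matrix.add_mul, Matrix.add_apply,
    transpose_mul_single_mul_apply]

lemma annih_transpose {U : Matrix (Fin n) (Fin n) ℝ} (hU : IsElem c i j U) :
    (annih n m c i j U).transpose = annih n m c i j U.transpose := by
  ext p q
  rw [Matrix.transpose_apply, annih_apply, annih_apply]
  by_cases hp : inPiv c i j p.1.1 ∧ inPiv c i j p.1.2 <;>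
    by_cases hq : inPiv c i j q.1.1 ∧ inPiv c i j q.1.2
  · rw [if_pos hq, if_pos hp]
  · rw [if_neg hq, if_pos hp]
    rcases not_and_or.1 hq with hq' | hq' <;>
      rw [hU.apply_eq_zero hp.1 hq', hU.apply_eq_zero hp.2 hq'] <;> ring
  · rw [if_pos hq, if_neg hp]
    rcases not_and_or.1 hp with hp' | hp' <;>
      rw [hU.transpose.apply_eq_zero hq.1 hp', hU.transpose.apply_eq_zero hq.2 hp'] <;> ring
  · rw [if_neg hq, if_neg hp]
    exact congrArg _ (mul_comm _ _)

end Annihilator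

theorem statement15_general (n m : ℕ) (c : ℕ → ℕ) (i j : ℕ) (ρ : ℝ) :
    (∀ U : Matrix (Fin n) (Fin n) ℝ, IsElem c i j U → Orth U →
      (annih n m c i j U).transpose = annih n m c i j U.transpose) ∧
    (∀ R ∈ Iij n m c i j, R.transpose ∈ Iij n m c i j) ∧
    (∀ R ∈ IijUBC n m c ρ i j, R.transpose ∈ IijUBC n m c ρ i j) := by
  refine ⟨fun U hU _ => annih_transpose hU, ?_, ?_⟩
  · rintro R ⟨U, hU, hO, rfl⟩
    exact ⟨U.transpose, hU.transpose, hO.transpose, annih_transpose hU⟩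
  · rintro R ⟨U, ⟨hU, hO, hσ, hγ⟩, rfl⟩
    refine ⟨U.transpose, ⟨hU.transpose, hO.transpose, ?_, ?_⟩, annih_transpose hU⟩
    · rwa [sigmaMinBlk_transpose, sigmaMinBlk_transpose]
    · rwa [sigmaMinBlk_transpose]

/-- Corollary 2.13: transposes of block Jacobi annihilators:
`R_{ij}(Û)ᵀ = R_{ij}(Ûᵀ)`, the class `I_{ij}` is closed under transposition,
and so is `I_{ij}^{UBC(ρ)}`. -/
theorem statement15 (n m : ℕ) (c : ℕ → ℕ) (hpart : IsPartition n m c)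
    (i j : ℕ) (hij : i < j) (hj : j < m) (ρ : ℝ) (hρ0 : 0 < ρ) (hρ1 : ρ ≤ 1) :
    (∀ U : Matrix (Fin n) (Fin n) ℝ, IsElem c i j U → Orth U →
      (annih n m c i j U).transpose = annih n m c i j U.transpose) ∧
    (∀ R ∈ Iij n m c i j, R.transpose ∈ Iij n m c i j) ∧
    (∀ R ∈ IijUBC n m c ρ i j, R.transpose ∈ IijUBC n m c ρ i j) :=
  statement15_general n m c i j ρ
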